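/- arXiv:2409.09622 — 3 statements merged into one kernel-verified Lean document; each statement's English description precedes it below -/
import Mathlib

section
/- The coefficient of z^n in the Taylor expansion at 0 of the rational function 1/((1-z)^{k-n} · (1-2z)), where k ≥ n, equals 1 + C(k,1) + C(k,2) + ... + C(k,n). -/
/-!
Multiplying a power series by `mk 1 = 1/(1-z)` replaces its coefficients by their partial sums.
Hence, by induction on the exponent `m = k - n`, the claim reduces to the identity
`∑_{j ≤ n} ∑_{i ≤ j} C(m+j, i) = ∑_{i ≤ n} C(m+n+1, i)`, which follows from Pascal's rule
summed over `i`; the base case `m = 0` is `∑_{i ≤ n} C(n, i) = 2^n`.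
-/

open PowerSeries Finset

theorem PowerSeries.coeff_mk_one_mul {R : Type*} [CommSemiring R] (f : R⟦X⟧) (n : ℕ) :
    coeff n (mk 1 * f) = ∑ j ∈ range (n + 1), coeff j f := by
  simp [mul_comm (mk 1), coeff_mul, Nat.sum_antidiagonal_eq_sum_range_succ_mk]

theorem Nat.sum_range_choose_succ (N n : ℕ) :
    ∑ i ∈ range (n + 2), (N + 1).choose i =
      ∑ i ∈ range (n + 2), N.choose i + ∑ i ∈ range (n + 1), N.choose i := by
  rw [sum_range_succ' (fun i => (N + 1).choose i), sum_range_succ' (fun i => N.choose i)]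
  simp only [Nat.choose_succ_succ', sum_add_distrib, Nat.choose_zero_right]
  ring

theorem Nat.sum_range_sum_range_choose_add (m n : ℕ) :
    ∑ j ∈ range (n + 1), ∑ i ∈ range (j + 1), (m + j).choose i =
      ∑ i ∈ range (n + 1), (m + n + 1).choose i := by
  induction n with
  | zero => simp
  | succ n ih =>
    rw [sum_range_succ, ih, ← add_assoc, Nat.sum_range_choose_succ (m + n + 1) n]
    ring

theorem PowerSeries.coeff_mk_one_pow_mul_mk_two_pow {R : Type*} [CommSemiring R] (m n : ℕ) :
    coeff n ((mk 1 : R⟦X⟧) ^ m * mk (fun j => 2 ^ j)) =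
      ∑ i ∈ range (n + 1), ((m + n).choose i : R) := by
  induction m generalizing n with
  | zero => simp [← Nat.cast_sum, Nat.sum_range_choose]
  | succ m ih =>
    rw [pow_succ', mul_assoc, coeff_mk_one_mul]
    simp only [ih, ← Nat.cast_sum]
    rw [Nat.sum_range_sum_range_choose_add, add_right_comm]

/-- The coefficient of `z^n` in `1/((1-z)^(k-n) (1-2z))`, expanded via geometric
series as `(∑ z^j)^(k-n) · (∑ 2^j z^j)`, equals `∑_{i=0}^n C(k,i)` when `k ≥ n`. -/
theorem stmt_0 (n k : ℕ) (h : n ≤ k) :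
    PowerSeries.coeff (R := ℚ) n
      ((PowerSeries.mk (fun _ : ℕ => (1 : ℚ))) ^ (k - n) *
        PowerSeries.mk (fun j : ℕ => (2 : ℚ) ^ j)) =
      ∑ i ∈ Finset.range (n + 1), (k.choose i : ℚ) := by
  rw [← Pi.one_def, coeff_mk_one_pow_mul_mk_two_pow, Nat.sub_add_cancel h]
end

section
/- An arrangement of k hyperplanes in general position in R^n has exactly 1 + C(k,1) + C(k,2) + ... + C(k,n) regions, i.e., the complement of the union of the hyperplanes has exactly ∑_{i=0}^n C(k,i) connected components. -/
open AffineMap Finset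

section helpers

variable {V : Type*} [AddCommGroup V] [Module ℝ V]

/-- value of a real-valued affine map along a line -/
lemma lineMap_val (g : V →ᵃ[ℝ] ℝ) (x y : V) (t : ℝ) :
    g (AffineMap.lineMap x y t) = g x + t * (g y - g x) := by
  rw [AffineMap.apply_lineMap]
  simp [AffineMap.lineMap_apply, smul_eq_mul]
  ring

lemma cross (g : V →ᵃ[ℝ] ℝ) {x y : V} (hx : 0 < g x) (hy : g y < 0) :
    ∃ t : ℝ, 0 ≤ t ∧ t ≤ 1 ∧ g (AffineMap.lineMap x y t) = 0 := by
  have hden : 0 < g x - g y := by linarith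
  refine ⟨g x / (g x - g y), by positivity, ?_, ?_⟩
  · rw [div_le_one hden]; linarith
  · rw [lineMap_val]; field_simp; ring

lemma exists_small {k : ℕ} (a b : Fin k → ℝ) (ha : ∀ i, 0 < a i) :
    ∃ t : ℝ, 0 < t ∧ ∀ i, t * |b i| < a i := by
  cases isEmpty_or_nonempty (Fin k) with
  | inl h => exact ⟨1, one_pos, fun i => isEmptyElim i⟩
  | inr h =>
    refine ⟨Finset.univ.inf' ⟨Classical.arbitrary _, Finset.mem_univ _⟩
      (fun i => a i / (|b i| + 1)), ?_, ?_⟩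
    · refine (Finset.lt_inf'_iff _).2 ?_
      intro i _
      have := ha i
      positivity
    · intro i
      have h1 : Finset.univ.inf' ⟨Classical.arbitrary _, Finset.mem_univ _⟩
          (fun i => a i / (|b i| + 1)) ≤ a i / (|b i| + 1) :=
        Finset.inf'_le _ (Finset.mem_univ i)
      have hb : (0:ℝ) ≤ |b i| := abs_nonneg _
      have h2 : a i / (|b i| + 1) * |b i| < a i := by
        rw [div_mul_eq_mul_div, div_lt_iff₀ (by linarith)]
        nlinarith [ha i]
      calc _ ≤ a i / (|b i| + 1) * |b i| := mul_le_mul_of_nonneg_right h1 hb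
        _ < a i := h2

lemma convex_neg {a b t : ℝ} (ha : a < 0) (hb : b < 0) (h0 : 0 ≤ t) (h1 : t ≤ 1) :
    a + t * (b - a) < 0 := by
  rcases eq_or_lt_of_le h0 with h | h
  · rw [← h]; simpa using ha
  · nlinarith [mul_pos h (show (0:ℝ) < -b by linarith),
      mul_nonneg (sub_nonneg.2 h1) (show (0:ℝ) ≤ -a by linarith)]

lemma convex_pos {a b t : ℝ} (ha : 0 < a) (hb : 0 < b) (h0 : 0 ≤ t) (h1 : t ≤ 1) :
    0 < a + t * (b - a) := by
  rcases eq_or_lt_of_le h0 with h | h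
  · rw [← h]; simpa using ha
  · nlinarith [mul_pos h hb, mul_nonneg (sub_nonneg.2 h1) ha.le]

/-- feasibility of a sign vector for an arrangement restricted to `Z` -/
def Feas (Z : Set V) {k : ℕ} (g : Fin k → V →ᵃ[ℝ] ℝ) (σ : Fin k → Bool) : Prop :=
  ∃ x ∈ Z, ∀ i, if σ i = true then 0 < g i x else g i x < 0

lemma pascal (k e : ℕ) : ∑ i ∈ Finset.range (e+2), (k+1).choose i =
    ∑ i ∈ Finset.range (e+2), k.choose i + ∑ i ∈ Finset.range (e+1), k.choose i := by
  rw [Finset.sum_range_succ' (fun i => (k+1).choose i) (e+1),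
      Finset.sum_range_succ' (fun i => k.choose i) (e+1)]
  simp only [Nat.choose_succ_succ, Finset.sum_add_distrib, Nat.choose_zero_right, Nat.succ_eq_add_one]
  omega

end helpers

section core

variable {V : Type*} [AddCommGroup V] [Module ℝ V]

lemma perturb {k : ℕ} (g : Fin (k+1) → V →ᵃ[ℝ] ℝ) (σ' : Fin k → Bool) (x y : V)
    (hx : ∀ i : Fin k, if σ' i = true then 0 < g i.castSucc x else g i.castSucc x < 0)
    (h0 : g (Fin.last k) x = 0) (h1 : g (Fin.last k) y = 1) :
    ∃ t : ℝ, 0 < t ∧ ∀ u : ℝ, |u| ≤ t →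
      ((∀ i : Fin k, if σ' i = true then 0 < g i.castSucc (AffineMap.lineMap x y u)
          else g i.castSucc (AffineMap.lineMap x y u) < 0) ∧
        g (Fin.last k) (AffineMap.lineMap x y u) = u) := by
  have ha : ∀ i : Fin k, 0 < |g i.castSucc x| := by
    intro i
    have hgi := hx i
    cases h : σ' i
    · simp only [h, Bool.false_eq_true, if_false] at hgi
      exact abs_pos.2 (ne_of_lt hgi)
    · simp only [h, if_true] at hgi
      exact abs_pos.2 (ne_of_gt hgi)
  obtain ⟨t, ht, hts⟩ := exists_small (fun i : Fin k => |g i.castSucc x|)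
    (fun i : Fin k => g i.castSucc y - g i.castSucc x) ha
  refine ⟨t, ht, fun u hu => ⟨fun i => ?_, ?_⟩⟩
  · have key : |u * (g i.castSucc y - g i.castSucc x)| < |g i.castSucc x| := by
      rw [abs_mul]
      calc |u| * |g i.castSucc y - g i.castSucc x|
          ≤ t * |g i.castSucc y - g i.castSucc x| :=
            mul_le_mul_of_nonneg_right hu (abs_nonneg _)
        _ < |g i.castSucc x| := hts i
    rw [lineMap_val]
    have hgi := hx i
    have hk := abs_lt.1 key
    cases h : σ' i
    · simp only [h, Bool.false_eq_true, if_false] at hgi ⊢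
      rw [abs_of_neg hgi] at hk
      linarith [hk.1, hk.2]
    · simp only [h, if_true] at hgi ⊢
      rw [abs_of_pos hgi] at hk
      linarith [hk.1, hk.2]
  · rw [lineMap_val, h0, h1]; ring

lemma core_d0 {k : ℕ} (Z : Set V) (g : Fin k → V →ᵃ[ℝ] ℝ)
    (hZ : ∀ x ∈ Z, ∀ y ∈ Z, ∀ t : ℝ, (AffineMap.lineMap x y t : V) ∈ Z)
    (H1 : ∀ s : Finset (Fin k), s.card ≤ 0 → ∀ t : Fin k → ℝ, ∃ x ∈ Z, ∀ i ∈ s, g i x = t i)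
    (H2 : ∀ s : Finset (Fin k), 0 < s.card → ∀ x ∈ Z, ¬(∀ i ∈ s, g i x = 0)) :
    Nat.card {σ : Fin k → Bool // Feas Z g σ} = 1 := by
  obtain ⟨x₀, hx₀, -⟩ := H1 ∅ (by simp) 0
  have hne : ∀ x ∈ Z, ∀ i, g i x ≠ 0 := by
    intro x hx i h
    exact H2 {i} (by simp) x hx (by simpa using h)
  have same_sign : ∀ x ∈ Z, ∀ y ∈ Z, ∀ i, 0 < g i x → 0 < g i y := by
    intro x hx y hy i hgx
    by_contra h
    have hy' : g i y < 0 := lt_of_le_of_ne (not_lt.1 h) (hne y hy i)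
    obtain ⟨t, -, -, h0⟩ := cross (g i) hgx hy'
    exact hne _ (hZ x hx y hy t) i h0
  rw [Nat.card_eq_one_iff_unique]
  constructor
  · constructor
    rintro ⟨σ, xσ, hxσ, hσ⟩ ⟨τ, xτ, hxτ, hτ⟩
    apply Subtype.ext
    funext i
    show σ i = τ i
    have hσi := hσ i
    have hτi := hτ i
    cases h : σ i <;> cases h' : τ i
    · rfl
    · rw [h] at hσi; rw [h'] at hτi
      simp only [Bool.false_eq_true, if_false, if_true] at hσi hτi
      exact absurd (same_sign _ hxτ _ hxσ i hτi) (by linarith)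
    · rw [h] at hσi; rw [h'] at hτi
      simp only [Bool.false_eq_true, if_false, if_true] at hσi hτi
      exact absurd (same_sign _ hxσ _ hxτ i hσi) (by linarith)
    · rfl
  · refine ⟨⟨fun i => decide (0 < g i x₀), x₀, hx₀, fun i => ?_⟩⟩
    by_cases h : 0 < g i x₀
    · simp [h]
    · simp [h]
      exact lt_of_le_of_ne (not_lt.1 h) (hne x₀ hx₀ i)

end core

section split

lemma comp_lastCases {k : ℕ} {α : Sort*} (b : α) (σ' : Fin k → α) :
    (fun i : Fin k => Fin.lastCases (motive := fun _ => α) b σ' i.castSucc) = σ' := by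
  funext i; exact Fin.lastCases_castSucc i

lemma eq_lastCases {k : ℕ} {α : Sort*} (σ : Fin (k+1) → α) :
    σ = Fin.lastCases (motive := fun _ => α) (σ (Fin.last k)) (fun i => σ i.castSucc) := by
  funext j
  induction j using Fin.lastCases with
  | last => rw [Fin.lastCases_last]
  | cast i => rw [Fin.lastCases_castSucc]

lemma card_split {k : ℕ} (P : (Fin (k+1) → Bool) → Prop) (D R : (Fin k → Bool) → Prop)
    (hdrop : ∀ σ, P σ → D (fun i => σ i.castSucc))
    (hA : ∀ σ', D σ' → ∃ b, P (Fin.lastCases b σ'))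
    (hB1 : ∀ σ', P (Fin.lastCases true σ') → P (Fin.lastCases false σ') → R σ')
    (hB2 : ∀ σ', R σ' → ∀ b, P (Fin.lastCases b σ')) :
    Nat.card {σ // P σ} = Nat.card {σ' // D σ'} + Nat.card {σ' // R σ'} := by
  classical
  let Φ : {σ // P σ} → {σ' // D σ'} ⊕ {σ' // R σ'} := fun p =>
    if h : p.1 (Fin.last k) = false ∧ R (fun i => p.1 i.castSucc)
    then Sum.inr ⟨_, h.2⟩ else Sum.inl ⟨_, hdrop _ p.2⟩
  rw [Nat.card_eq_of_bijective Φ ?_, Nat.card_sum]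
  constructor
  · rintro ⟨σ₁, h₁⟩ ⟨σ₂, h₂⟩ heq
    simp only [Φ] at heq
    apply Subtype.ext
    show σ₁ = σ₂
    by_cases c₁ : σ₁ (Fin.last k) = false ∧ R fun i => σ₁ i.castSucc <;>
      by_cases c₂ : σ₂ (Fin.last k) = false ∧ R fun i => σ₂ i.castSucc
    · rw [dif_pos c₁, dif_pos c₂] at heq
      have hfuns := congrArg Subtype.val (Sum.inr.inj heq)
      simp only at hfuns
      funext j
      induction j using Fin.lastCases with
      | last => rw [c₁.1, c₂.1]
      | cast i => exact congrFun hfuns i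
    · rw [dif_pos c₁, dif_neg c₂] at heq
      exact absurd heq (by simp)
    · rw [dif_neg c₁, dif_pos c₂] at heq
      exact absurd heq (by simp)
    · rw [dif_neg c₁, dif_neg c₂] at heq
      have hfuns := congrArg Subtype.val (Sum.inl.inj heq)
      simp only at hfuns
      have hcc : (fun i : Fin k => σ₁ i.castSucc) = fun i => σ₂ i.castSucc := hfuns
      funext j
      induction j using Fin.lastCases with
      | cast i => exact congrFun hfuns i
      | last =>
        cases hb₁ : σ₁ (Fin.last k) <;> cases hb₂ : σ₂ (Fin.last k)
        · rfl
        · exfalso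
          have hres : ¬ R (fun i => σ₁ i.castSucc) := fun hr => c₁ ⟨hb₁, hr⟩
          apply hres
          apply hB1
          · have := h₂
            rw [eq_lastCases σ₂, hb₂, ← hcc] at this
            exact this
          · have := h₁
            rw [eq_lastCases σ₁, hb₁] at this
            exact this
        · exfalso
          have hres : ¬ R (fun i : Fin k => σ₂ i.castSucc) := fun hr => c₂ ⟨hb₂, hr⟩
          apply hres
          apply hB1
          · have := h₁
            rw [eq_lastCases σ₁, hb₁, hcc] at this
            exact this
          · have := h₂
            rw [eq_lastCases σ₂, hb₂] at this
            exact this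
        · rfl
  · rintro (⟨σ', hσ'⟩ | ⟨σ', hσ'⟩)
    · by_cases hres : R σ'
      · refine ⟨⟨Fin.lastCases true σ', hB2 σ' hres true⟩, ?_⟩
        simp only [Φ]
        rw [dif_neg]
        · exact congrArg Sum.inl (Subtype.ext (comp_lastCases true σ'))
        · rintro ⟨hl, -⟩
          rw [Fin.lastCases_last] at hl
          cases hl
      · obtain ⟨b, hb⟩ := hA σ' hσ'
        refine ⟨⟨Fin.lastCases b σ', hb⟩, ?_⟩
        simp only [Φ]
        rw [dif_neg]
        · exact congrArg Sum.inl (Subtype.ext (comp_lastCases b σ'))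
        · rintro ⟨-, hr⟩
          rw [comp_lastCases b σ'] at hr
          exact hres hr
    · refine ⟨⟨Fin.lastCases false σ', hB2 σ' hσ' false⟩, ?_⟩
      simp only [Φ]
      rw [dif_pos ⟨Fin.lastCases_last, by rw [comp_lastCases]; exact hσ'⟩]
      exact congrArg Sum.inr (Subtype.ext (comp_lastCases false σ'))

end split

section coremain

lemma core {V : Type*} [AddCommGroup V] [Module ℝ V] (k : ℕ) :
    ∀ (d : ℕ) (Z : Set V) (g : Fin k → V →ᵃ[ℝ] ℝ),
      (∀ x ∈ Z, ∀ y ∈ Z, ∀ t : ℝ, (AffineMap.lineMap x y t : V) ∈ Z) →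
      (∀ s : Finset (Fin k), s.card ≤ d → ∀ t : Fin k → ℝ, ∃ x ∈ Z, ∀ i ∈ s, g i x = t i) →
      (∀ s : Finset (Fin k), d < s.card → ∀ x ∈ Z, ¬(∀ i ∈ s, g i x = 0)) →
      Nat.card {σ : Fin k → Bool // Feas Z g σ} = ∑ i ∈ Finset.range (d+1), k.choose i := by
  induction k with
  | zero =>
    intro d Z g hZ H1 H2
    obtain ⟨x₀, hx₀, -⟩ := H1 ∅ (by simp) 0
    have h1 : Nat.card {σ : Fin 0 → Bool // Feas Z g σ} = 1 := by
      rw [Nat.card_eq_one_iff_unique]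
      refine ⟨⟨?_⟩, ⟨⟨fun i => i.elim0, x₀, hx₀, fun i => i.elim0⟩⟩⟩
      rintro ⟨σ, -⟩ ⟨τ, -⟩
      apply Subtype.ext; funext i; exact i.elim0
    rw [h1, eq_comm, Finset.sum_eq_single 0]
    · simp
    · intro b _ hb
      exact Nat.choose_eq_zero_of_lt (by omega)
    · intro h; simp at h
  | succ k IH =>
    intro d Z g hZ H1 H2
    match d with
    | 0 =>
      rw [core_d0 Z g hZ H1 H2]
      simp
    | e+1 =>
      classical
      -- the restricted constraint set
      set Z' : Set V := {x | x ∈ Z ∧ g (Fin.last k) x = 0} with hZ'def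
      have hZ'line : ∀ x ∈ Z', ∀ y ∈ Z', ∀ t : ℝ, (AffineMap.lineMap x y t : V) ∈ Z' := by
        rintro x ⟨hxZ, hx0⟩ y ⟨hyZ, hy0⟩ t
        exact ⟨hZ x hxZ y hyZ t, by rw [lineMap_val, hx0, hy0]; ring⟩
      have hnotmem : ∀ s : Finset (Fin k), Fin.last k ∉ s.map Fin.castSuccEmb := by
        intro s hmem
        obtain ⟨i, -, hi⟩ := Finset.mem_map.1 hmem
        exact absurd hi (Fin.castSucc_lt_last i).ne
      have H1' : ∀ s : Finset (Fin k), s.card ≤ e+1 → ∀ t : Fin k → ℝ,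
          ∃ x ∈ Z, ∀ i ∈ s, g i.castSucc x = t i := by
        intro s hs t
        obtain ⟨x, hx, hval⟩ := H1 (s.map Fin.castSuccEmb)
          (by rw [Finset.card_map]; exact hs) (Fin.lastCases 0 t)
        refine ⟨x, hx, fun i hi => ?_⟩
        have hmem : i.castSucc ∈ s.map Fin.castSuccEmb := by
          refine Finset.mem_map.2 ⟨i, hi, rfl⟩
        have h2 := hval i.castSucc hmem
        rwa [Fin.lastCases_castSucc] at h2
      have H2' : ∀ s : Finset (Fin k), e+1 < s.card → ∀ x ∈ Z,
          ¬(∀ i ∈ s, g i.castSucc x = 0) := by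
        intro s hs x hx hall
        refine H2 (s.map Fin.castSuccEmb) (by rw [Finset.card_map]; exact hs) x hx ?_
        intro j hj
        obtain ⟨i, hi, rfl⟩ := Finset.mem_map.1 hj
        exact hall i hi
      have H1'' : ∀ s : Finset (Fin k), s.card ≤ e → ∀ t : Fin k → ℝ,
          ∃ x ∈ Z', ∀ i ∈ s, g i.castSucc x = t i := by
        intro s hs t
        obtain ⟨x, hx, hval⟩ := H1 (insert (Fin.last k) (s.map Fin.castSuccEmb))
          (le_trans (Finset.card_insert_le _ _) (by rw [Finset.card_map]; omega))
          (Fin.lastCases 0 t)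
        refine ⟨x, ⟨hx, ?_⟩, fun i hi => ?_⟩
        · have h2 := hval (Fin.last k) (Finset.mem_insert_self _ _)
          rwa [Fin.lastCases_last] at h2
        · have hmem : i.castSucc ∈ s.map Fin.castSuccEmb := by
            refine Finset.mem_map.2 ⟨i, hi, rfl⟩
          have h2 := hval i.castSucc (Finset.mem_insert_of_mem hmem)
          rwa [Fin.lastCases_castSucc] at h2
      have H2'' : ∀ s : Finset (Fin k), e < s.card → ∀ x ∈ Z',
          ¬(∀ i ∈ s, g i.castSucc x = 0) := by
        rintro s hs x ⟨hxZ, hx0⟩ hall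
        refine H2 (insert (Fin.last k) (s.map Fin.castSuccEmb)) ?_ x hxZ ?_
        · rw [Finset.card_insert_of_notMem (hnotmem s), Finset.card_map]; omega
        · intro j hj
          rcases Finset.mem_insert.1 hj with rfl | hj'
          · exact hx0
          · obtain ⟨i, hi, rfl⟩ := Finset.mem_map.1 hj'
            exact hall i hi
      have hT1 := IH (e+1) Z (fun i => g i.castSucc) hZ H1' H2'
      have hT2 := IH e Z' (fun i => g i.castSucc) hZ'line H1'' H2''
      obtain ⟨y, hyZ, hy1⟩ : ∃ y ∈ Z, g (Fin.last k) y = 1 := by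
        obtain ⟨y, hy, hval⟩ := H1 {Fin.last k} (by simp) (fun _ => 1)
        exact ⟨y, hy, hval _ (Finset.mem_singleton_self _)⟩
      -- the three geometric claims
      have hdrop : ∀ σ : Fin (k+1) → Bool, Feas Z g σ →
          Feas Z (fun i : Fin k => g i.castSucc) (fun i => σ i.castSucc) := by
        rintro σ ⟨x, hxZ, hx⟩
        exact ⟨x, hxZ, fun i => hx i.castSucc⟩
      have hA : ∀ σ' : Fin k → Bool, Feas Z (fun i : Fin k => g i.castSucc) σ' →
          ∃ b, Feas Z g (Fin.lastCases b σ') := by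
        rintro σ' ⟨x, hxZ, hx⟩
        rcases lt_trichotomy (g (Fin.last k) x) 0 with h | h | h
        · refine ⟨false, x, hxZ, fun j => ?_⟩
          induction j using Fin.lastCases with
          | last => simp only [Fin.lastCases_last]; simpa using h
          | cast i => simp only [Fin.lastCases_castSucc]; exact hx i
        · obtain ⟨t, ht, hts⟩ := perturb g σ' x y hx h hy1
          obtain ⟨hsigns, hlast⟩ := hts t (le_of_eq (abs_of_pos ht))
          refine ⟨true, AffineMap.lineMap x y t, hZ x hxZ y hyZ t, fun j => ?_⟩
          induction j using Fin.lastCases with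
          | last =>
            simp only [Fin.lastCases_last]
            rw [if_pos trivial, hlast]; exact ht
          | cast i => simp only [Fin.lastCases_castSucc]; exact hsigns i
        · refine ⟨true, x, hxZ, fun j => ?_⟩
          induction j using Fin.lastCases with
          | last =>
            simp only [Fin.lastCases_last]
            rw [if_pos trivial]; exact h
          | cast i => simp only [Fin.lastCases_castSucc]; exact hx i
      have hB1 : ∀ σ' : Fin k → Bool, Feas Z g (Fin.lastCases true σ') →
          Feas Z g (Fin.lastCases false σ') → Feas Z' (fun i : Fin k => g i.castSucc) σ' := by
        rintro σ' ⟨xp, hxp, hp⟩ ⟨xm, hxm, hm⟩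
        have hpl : 0 < g (Fin.last k) xp := by
          have h3 := hp (Fin.last k)
          simp only [Fin.lastCases_last] at h3
          rwa [if_pos trivial] at h3
        have hml : g (Fin.last k) xm < 0 := by
          have h3 := hm (Fin.last k)
          simp only [Fin.lastCases_last] at h3
          simpa using h3
        obtain ⟨t, ht0, ht1, hzero⟩ := cross (g (Fin.last k)) hpl hml
        refine ⟨AffineMap.lineMap xp xm t, ⟨hZ xp hxp xm hxm t, hzero⟩, fun i => ?_⟩
        have hpi := hp i.castSucc
        simp only [Fin.lastCases_castSucc] at hpi
        have hmi := hm i.castSucc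
        simp only [Fin.lastCases_castSucc] at hmi
        have hval : g i.castSucc (AffineMap.lineMap xp xm t) =
            g i.castSucc xp + t * (g i.castSucc xm - g i.castSucc xp) := lineMap_val _ _ _ _
        cases h : σ' i
        · simp only [h, Bool.false_eq_true, if_false] at hpi hmi ⊢
          rw [hval]; exact convex_neg hpi hmi ht0 ht1
        · simp only [h, if_true] at hpi hmi ⊢
          rw [hval]; exact convex_pos hpi hmi ht0 ht1
      have hB2 : ∀ σ' : Fin k → Bool, Feas Z' (fun i : Fin k => g i.castSucc) σ' →
          ∀ b, Feas Z g (Fin.lastCases b σ') := by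
        rintro σ' ⟨x, ⟨hxZ, hx0⟩, hx⟩ b
        obtain ⟨t, ht, hts⟩ := perturb g σ' x y hx hx0 hy1
        have hu : |(if b = true then t else -t)| ≤ t := by
          cases b
          · simp [abs_of_pos ht]
          · simp [abs_of_pos ht]
        obtain ⟨hsigns, hlast⟩ := hts _ hu
        refine ⟨AffineMap.lineMap x y (if b = true then t else -t),
          hZ x hxZ y hyZ _, fun j => ?_⟩
        induction j using Fin.lastCases with
        | last =>
          simp only [Fin.lastCases_last]
          rw [hlast]
          cases b
          · simpa using ht
          · simpa using ht
        | cast i => simp only [Fin.lastCases_castSucc]; exact hsigns i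
      have hsplit := card_split (Feas Z g) (Feas Z (fun i : Fin k => g i.castSucc))
        (Feas Z' (fun i : Fin k => g i.castSucc)) hdrop hA hB1 hB2
      rw [hsplit, hT1, hT2, show e+1+1 = e+2 from rfl]
      exact (pascal k e).symm

end coremain

section final

/-- the affine map `x ↦ f x - r` -/
noncomputable def shiftMap {n : ℕ} (φ : (Fin n → ℝ) →ₗ[ℝ] ℝ) (r : ℝ) : (Fin n → ℝ) →ᵃ[ℝ] ℝ where
  toFun := fun x => φ x - r
  linear := φ
  map_vadd' := by
    intro p v
    show φ (v + p) - r = φ v + (φ p - r)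
    rw [map_add]; ring

@[simp] lemma shiftMap_apply {n : ℕ} (φ : (Fin n → ℝ) →ₗ[ℝ] ℝ) (r : ℝ) (x : Fin n → ℝ) :
    shiftMap φ r x = φ x - r := rfl

theorem stmt_3' (n k : ℕ) (f : Fin k → ((Fin n → ℝ) →ₗ[ℝ] ℝ)) (c : Fin k → ℝ)
    (hf : ∀ i, f i ≠ 0)
    (hgen₁ : ∀ s : Finset (Fin k), s.card ≤ n →
      ∃ A : AffineSubspace ℝ (Fin n → ℝ), (A : Set (Fin n → ℝ)).Nonempty ∧
        (A : Set (Fin n → ℝ)) = ⋂ i ∈ s, {x | f i x = c i} ∧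
        Module.finrank ℝ A.direction = n - s.card)
    (hgen₂ : ∀ s : Finset (Fin k), n < s.card → ⋂ i ∈ s, {x : Fin n → ℝ | f i x = c i} = ∅) :
    Nat.card (ConnectedComponents {x : Fin n → ℝ // ∀ i, f i x ≠ c i}) =
      ∑ i ∈ Finset.range (n + 1), k.choose i := by
  classical
  set G : Fin k → (Fin n → ℝ) →ᵃ[ℝ] ℝ := fun i => shiftMap (f i) (c i) with hGdef
  -- hypotheses of the core lemma
  have hZline : ∀ x ∈ (Set.univ : Set (Fin n → ℝ)), ∀ y ∈ (Set.univ : Set (Fin n → ℝ)),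
      ∀ t : ℝ, (AffineMap.lineMap x y t : Fin n → ℝ) ∈ (Set.univ : Set (Fin n → ℝ)) :=
    fun _ _ _ _ _ => Set.mem_univ _
  have H1 : ∀ s : Finset (Fin k), s.card ≤ n → ∀ t : Fin k → ℝ,
      ∃ x ∈ (Set.univ : Set (Fin n → ℝ)), ∀ i ∈ s, G i x = t i := by
    intro s hs t
    obtain ⟨A, ⟨p, hp⟩, hAset, hdim⟩ := hgen₁ s hs
    have hpmem : ∀ i ∈ s, f i p = c i := by
      intro i hi
      have hpA : p ∈ (A : Set (Fin n → ℝ)) := hp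
      rw [hAset] at hpA
      exact Set.mem_iInter₂.1 hpA i hi
    have hdir : A.direction = ⨅ i : s, LinearMap.ker (f i) := by
      ext v
      rw [← AffineSubspace.vadd_mem_iff_mem_direction v hp, Submodule.mem_iInf]
      constructor
      · rintro hv ⟨i, hi⟩
        have hmem : v +ᵥ p ∈ (A : Set (Fin n → ℝ)) := hv
        rw [hAset] at hmem
        have h2 : f i (v + p) = c i := Set.mem_iInter₂.1 hmem i hi
        rw [map_add, hpmem i hi] at h2
        exact LinearMap.mem_ker.2 (by linarith)
      · intro hv
        show v +ᵥ p ∈ (A : Set (Fin n → ℝ))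
        rw [hAset]
        refine Set.mem_iInter₂.2 fun i hi => ?_
        have hvi : f i v = 0 := LinearMap.mem_ker.1 (hv ⟨i, hi⟩)
        show f i (v + p) = c i
        rw [map_add, hvi, hpmem i hi, zero_add]
    set F : (Fin n → ℝ) →ₗ[ℝ] (s → ℝ) := LinearMap.pi (fun i : s => f i) with hFdef
    have hker : LinearMap.ker F = ⨅ i : s, LinearMap.ker (f i) := LinearMap.ker_pi _
    have hkerrank : Module.finrank ℝ (LinearMap.ker F) = n - s.card := by
      rw [hker, ← hdir]; exact hdim
    have hrn := LinearMap.finrank_range_add_finrank_ker F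
    have hdom : Module.finrank ℝ (Fin n → ℝ) = n := by
      rw [Module.finrank_pi]; simp
    rw [hkerrank, hdom] at hrn
    have hcards : Module.finrank ℝ (s → ℝ) = s.card := by
      rw [Module.finrank_pi]; exact Fintype.card_coe s
    have htop : LinearMap.range F = ⊤ := Submodule.eq_top_of_finrank_eq (by
      rw [hcards]; omega)
    have hsurj : Function.Surjective F := LinearMap.range_eq_top.1 htop
    obtain ⟨v, hv⟩ := hsurj (fun i : s => t i)
    refine ⟨v + p, Set.mem_univ _, fun i hi => ?_⟩
    have hFv : f i v = t i := congrFun hv ⟨i, hi⟩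
    show f i (v + p) - c i = t i
    rw [map_add, hpmem i hi, hFv]; ring
  have H2 : ∀ s : Finset (Fin k), n < s.card → ∀ x ∈ (Set.univ : Set (Fin n → ℝ)),
      ¬(∀ i ∈ s, G i x = 0) := by
    intro s hs x _ hall
    have hx : x ∈ ⋂ i ∈ s, {y : Fin n → ℝ | f i y = c i} := by
      refine Set.mem_iInter₂.2 fun i hi => ?_
      have h2 : f i x - c i = 0 := hall i hi
      show f i x = c i
      linarith
    rw [hgen₂ s hs] at hx
    exact hx
  have hcore := core k n Set.univ G hZline H1 H2
  -- the sign map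
  set X := {x : Fin n → ℝ // ∀ i, f i x ≠ c i} with hXdef
  set sgn : X → (Fin k → Bool) := fun x i => decide (c i < f i x.1) with hsgndef
  have hflcont : ∀ i, Continuous (fun y : X => f i y.1) :=
    fun i => (f i).continuous_of_finiteDimensional.comp continuous_subtype_val
  have hlc : IsLocallyConstant sgn := by
    rw [IsLocallyConstant.iff_exists_open]
    intro x
    refine ⟨⋂ i, (if c i < f i x.1 then {y : X | c i < f i y.1} else {y : X | f i y.1 < c i}),
      ?_, ?_, ?_⟩
    · apply isOpen_iInter_of_finite
      intro i
      split_ifs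
      · exact isOpen_lt continuous_const (hflcont i)
      · exact isOpen_lt (hflcont i) continuous_const
    · refine Set.mem_iInter.2 fun i => ?_
      split_ifs with h
      · exact h
      · exact lt_of_le_of_ne (not_lt.1 h) (x.2 i)
    · intro y hy
      funext i
      have hyi := Set.mem_iInter.1 hy i
      by_cases h : c i < f i x.1
      · rw [if_pos h] at hyi
        have hyi' : c i < f i y.1 := hyi
        show decide (c i < f i y.1) = decide (c i < f i x.1)
        exact decide_eq_decide.2 (iff_of_true hyi' h)
      · rw [if_neg h] at hyi
        have hyi' : f i y.1 < c i := hyi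
        show decide (c i < f i y.1) = decide (c i < f i x.1)
        exact decide_eq_decide.2 (iff_of_false (not_lt.2 hyi'.le) h)
  have hc : Continuous sgn := hlc.continuous
  -- every point's sign vector is feasible
  have key1 : ∀ x : X, Feas Set.univ G (sgn x) := by
    intro x
    refine ⟨x.1, Set.mem_univ _, fun i => ?_⟩
    by_cases h : c i < f i x.1
    · have : sgn x i = true := decide_eq_true h
      rw [this, if_pos rfl]
      show 0 < f i x.1 - c i
      linarith
    · have : sgn x i = false := decide_eq_false h
      rw [this]
      simp only [Bool.false_eq_true, if_false]
      show f i x.1 - c i < 0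
      have := lt_of_le_of_ne (not_lt.1 h) (x.2 i)
      linarith
  -- every feasible sign vector is attained
  have key2 : ∀ σ, Feas Set.univ G σ → ∃ x : X, sgn x = σ := by
    rintro σ ⟨x0, -, hx0⟩
    have hmem : ∀ i, f i x0 ≠ c i := by
      intro i
      have h2 := hx0 i
      cases hσ : σ i
      · rw [hσ] at h2
        simp only [Bool.false_eq_true, if_false] at h2
        have : f i x0 - c i < 0 := h2
        intro he; rw [he] at this; simp at this
      · rw [hσ, if_pos rfl] at h2
        have : (0:ℝ) < f i x0 - c i := h2
        intro he; rw [he] at this; simp at this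
    refine ⟨⟨x0, hmem⟩, funext fun i => ?_⟩
    have h2 := hx0 i
    cases hσ : σ i
    · rw [hσ] at h2
      simp only [Bool.false_eq_true, if_false] at h2
      have h3 : f i x0 - c i < 0 := h2
      exact decide_eq_false (by intro h4; linarith)
    · rw [hσ, if_pos rfl] at h2
      have h3 : (0:ℝ) < f i x0 - c i := h2
      exact decide_eq_true (by linarith)
  -- same sign vector implies same connected component
  have key3 : ∀ x y : X, sgn x = sgn y →
      ConnectedComponents.mk x = ConnectedComponents.mk y := by
    intro x y hxy
    set Cσ : Set (Fin n → ℝ) :=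
      ⋂ i, (if c i < f i x.1 then {z | c i < f i z} else {z | f i z < c i}) with hCdef
    have hconv : Convex ℝ Cσ := by
      apply convex_iInter
      intro i
      split_ifs
      · exact convex_halfSpace_gt (f i).isLinear _
      · exact convex_halfSpace_lt (f i).isLinear _
    have hxC : x.1 ∈ Cσ := Set.mem_iInter.2 fun i => by
      split_ifs with h
      · exact h
      · exact lt_of_le_of_ne (not_lt.1 h) (x.2 i)
    have hyC : y.1 ∈ Cσ := Set.mem_iInter.2 fun i => by
      have hsgneq := congrFun hxy i
      split_ifs with h
      · have h1 : sgn x i = true := decide_eq_true h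
        have h2 : sgn y i = true := by rw [← hsgneq]; exact h1
        exact of_decide_eq_true h2
      · have h1 : sgn x i = false := decide_eq_false h
        have h2 : sgn y i = false := by rw [← hsgneq]; exact h1
        have h3 : ¬ (c i < f i y.1) := of_decide_eq_false h2
        exact lt_of_le_of_ne (not_lt.1 h3) (y.2 i)
    have hsub : Cσ ⊆ {z : Fin n → ℝ | ∀ i, f i z ≠ c i} := by
      intro z hz i
      have hzi := Set.mem_iInter.1 hz i
      split_ifs at hzi with h
      · exact ne_of_gt hzi
      · exact ne_of_lt hzi
    have hpc : IsPreconnected Cσ := hconv.isPreconnected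
    have him : (Subtype.val '' (Subtype.val ⁻¹' Cσ : Set X)) = Cσ := by
      rw [Set.image_preimage_eq_inter_range, Subtype.range_val_subtype]
      exact Set.inter_eq_left.2 hsub
    have hpcX : IsPreconnected (Subtype.val ⁻¹' Cσ : Set X) := by
      refine (Topology.IsInducing.subtypeVal.isPreconnected_image).1 ?_
      convert hpc using 1
      exact him
    have hxy' : y ∈ connectedComponent x :=
      hpcX.subset_connectedComponent (show x ∈ _ from hxC) (show y ∈ _ from hyC)
    exact (ConnectedComponents.coe_eq_coe'.2 hxy').symm
  -- lift the sign map to components and conclude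
  have hψ : ∀ C : ConnectedComponents X, Feas Set.univ G (hc.connectedComponentsLift C) := by
    intro C
    obtain ⟨x, rfl⟩ := ConnectedComponents.surjective_coe C
    exact key1 x
  have hbij : Function.Bijective
      (fun C => (⟨hc.connectedComponentsLift C, hψ C⟩ : {σ // Feas Set.univ G σ})) := by
    constructor
    · intro C₁ C₂ he
      obtain ⟨x, rfl⟩ := ConnectedComponents.surjective_coe C₁
      obtain ⟨y, rfl⟩ := ConnectedComponents.surjective_coe C₂
      have h2 := congrArg Subtype.val he
      exact key3 x y h2
    · rintro ⟨σ, hσ⟩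
      obtain ⟨x, hx⟩ := key2 σ hσ
      exact ⟨ConnectedComponents.mk x, Subtype.ext hx⟩
  rw [Nat.card_eq_of_bijective _ hbij]
  exact hcore

end final

/-- An arrangement of `k` affine hyperplanes in general position in `ℝⁿ` has exactly
`∑_{i=0}^n C(k,i)` regions: here the hyperplane `Hᵢ = {x : fᵢ x = cᵢ}` is given by a
nonzero linear functional `fᵢ` and constant `cᵢ`; general position means every
subfamily of size `j ≤ n` intersects in a nonempty affine subspace of dimension
`n − j`, and every subfamily of size `> n` has empty intersection. The regions are the
connected components of the complement of the union of the hyperplanes. -/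
theorem stmt_3 (n k : ℕ) (f : Fin k → ((Fin n → ℝ) →ₗ[ℝ] ℝ)) (c : Fin k → ℝ)
    (hf : ∀ i, f i ≠ 0)
    (hgen₁ : ∀ s : Finset (Fin k), s.card ≤ n →
      ∃ A : AffineSubspace ℝ (Fin n → ℝ), (A : Set (Fin n → ℝ)).Nonempty ∧
        (A : Set (Fin n → ℝ)) = ⋂ i ∈ s, {x | f i x = c i} ∧
        Module.finrank ℝ A.direction = n - s.card)
    (hgen₂ : ∀ s : Finset (Fin k), n < s.card → ⋂ i ∈ s, {x : Fin n → ℝ | f i x = c i} = ∅) :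
    Nat.card (ConnectedComponents {x : Fin n → ℝ // ∀ i, f i x ≠ c i}) =
      ∑ i ∈ Finset.range (n + 1), k.choose i :=
  stmt_3' n k f c hf hgen₁ hgen₂
end

section
/- For ε < 0, the complement in R^2 of the cubic curve {y^2 − (x−1)(x^2+ε) = 0} has exactly three connected components, while for ε ≥ 0 it has exactly two connected components. -/
section Stmt15Aux

lemma card_components_eq {X : Type} [TopologicalSpace X] {n : ℕ} (g : X → Fin n)
    (hg : Continuous g) (hsurj : Function.Surjective g)
    (hjoin : ∀ x y : X, g x = g y → Joined x y) :
    Nat.card (ConnectedComponents X) = n := by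
  have hbij : Function.Bijective hg.connectedComponentsLift := by
    constructor
    · intro a b hab
      obtain ⟨x, rfl⟩ := ConnectedComponents.surjective_coe a
      obtain ⟨y, rfl⟩ := ConnectedComponents.surjective_coe b
      rw [hg.connectedComponentsLift_apply_coe, hg.connectedComponentsLift_apply_coe] at hab
      have hj := hjoin x y hab
      have : y ∈ connectedComponent x := pathComponent_subset_component x hj
      exact (ConnectedComponents.coe_eq_coe' (x := y) (y := x)).2 this |>.symm
    · intro i
      obtain ⟨x, rfl⟩ := hsurj i
      exact ⟨x, hg.connectedComponentsLift_apply_coe x⟩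
  have := Nat.card_eq_of_bijective _ hbij
  simpa using this

lemma joinedIn_seg {S : Set (ℝ × ℝ)} {p q : ℝ × ℝ}
    (h : ∀ t : ℝ, 0 ≤ t → t ≤ 1 →
      ((1 - t) * p.1 + t * q.1, (1 - t) * p.2 + t * q.2) ∈ S) :
    JoinedIn S p q := by
  refine ⟨⟨⟨fun t => ((1 - (t : ℝ)) * p.1 + (t : ℝ) * q.1,
      (1 - (t : ℝ)) * p.2 + (t : ℝ) * q.2), by fun_prop⟩, by simp, by simp⟩,
    fun t => h t t.2.1 t.2.2⟩

def Uset (ε : ℝ) : Set (ℝ × ℝ) := {z | z.2 ^ 2 - (z.1 - 1) * (z.1 ^ 2 + ε) ≠ 0}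

lemma flip_mem {ε : ℝ} {z : ℝ × ℝ} (hz : z ∈ Uset ε) : ((z.1, -z.2) : ℝ × ℝ) ∈ Uset ε := by
  simp only [Uset, Set.mem_setOf_eq] at *
  intro h; apply hz; linear_combination h

lemma joined_flip (ε : ℝ) {p q : ℝ × ℝ} (h : JoinedIn (Uset ε) p q) :
    JoinedIn (Uset ε) (p.1, -p.2) (q.1, -q.2) := by
  have hc : Continuous (fun z : ℝ × ℝ => (z.1, -z.2)) := by fun_prop
  refine (h.map hc).mono ?_
  rintro _ ⟨z, hz, rfl⟩
  exact flip_mem hz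

lemma vert_neg (ε : ℝ) {p : ℝ × ℝ} (hp : p.2 ^ 2 - (p.1 - 1) * (p.1 ^ 2 + ε) < 0) :
    JoinedIn (Uset ε) p (p.1, 0) := by
  apply joinedIn_seg
  intro t ht0 ht1
  simp only [Uset, Set.mem_setOf_eq]
  have h2 : ((1 - t) * p.2 + t * 0) ^ 2 ≤ p.2 ^ 2 := by
    nlinarith [mul_nonneg (mul_nonneg ht0 (by linarith : (0:ℝ) ≤ 2 - t)) (sq_nonneg p.2)]
  apply ne_of_lt
  nlinarith

/-- branch region: f < 0, x > 1 -/
lemma branch_joined (ε : ℝ) {p q : ℝ × ℝ}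
    (hp : p.2 ^ 2 - (p.1 - 1) * (p.1 ^ 2 + ε) < 0)
    (hq : q.2 ^ 2 - (q.1 - 1) * (q.1 ^ 2 + ε) < 0)
    (hp1 : 1 < p.1) (hq1 : 1 < q.1) : JoinedIn (Uset ε) p q := by
  have hp2 : 0 < p.1 ^ 2 + ε := by nlinarith [sq_nonneg p.2]
  have hq2 : 0 < q.1 ^ 2 + ε := by nlinarith [sq_nonneg q.2]
  have seg2 : JoinedIn (Uset ε) (p.1, 0) (q.1, 0) := by
    apply joinedIn_seg
    intro t ht0 ht1
    simp only [Uset, Set.mem_setOf_eq]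
    set s : ℝ := (1 - t) * p.1 + t * q.1 with hs
    have key : 1 < s ∧ 0 < s ^ 2 + ε := by
      rcases le_total p.1 q.1 with h | h
      · have hps : p.1 ≤ s := by nlinarith [mul_nonneg ht0 (sub_nonneg.2 h)]
        exact ⟨lt_of_lt_of_le hp1 hps,
          by nlinarith [mul_nonneg (sub_nonneg.2 hps) (by linarith : (0:ℝ) ≤ s + p.1)]⟩
      · have hqs : q.1 ≤ s := by
          nlinarith [mul_nonneg (sub_nonneg.2 ht1) (sub_nonneg.2 h)]
        exact ⟨lt_of_lt_of_le hq1 hqs,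
          by nlinarith [mul_nonneg (sub_nonneg.2 hqs) (by linarith : (0:ℝ) ≤ s + q.1)]⟩
    apply ne_of_lt
    have := mul_pos (sub_pos.2 key.1) key.2
    nlinarith
  exact ((vert_neg ε hp).trans seg2).trans (vert_neg ε hq).symm

/-- oval region: f < 0, x < 1 -/
lemma oval_joined (ε : ℝ) {p q : ℝ × ℝ}
    (hp : p.2 ^ 2 - (p.1 - 1) * (p.1 ^ 2 + ε) < 0)
    (hq : q.2 ^ 2 - (q.1 - 1) * (q.1 ^ 2 + ε) < 0)
    (hp1 : p.1 < 1) (hq1 : q.1 < 1) : JoinedIn (Uset ε) p q := by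
  have hp2 : p.1 ^ 2 + ε < 0 := by nlinarith [sq_nonneg p.2]
  have hq2 : q.1 ^ 2 + ε < 0 := by nlinarith [sq_nonneg q.2]
  have seg2 : JoinedIn (Uset ε) (p.1, 0) (q.1, 0) := by
    apply joinedIn_seg
    intro t ht0 ht1
    simp only [Uset, Set.mem_setOf_eq]
    set s : ℝ := (1 - t) * p.1 + t * q.1 with hs
    obtain ⟨a, b, ha2, hb2, hsa, hsb, hb1⟩ :
        ∃ a b : ℝ, a ^ 2 + ε < 0 ∧ b ^ 2 + ε < 0 ∧ a ≤ s ∧ s ≤ b ∧ b < 1 := by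
      rcases le_total p.1 q.1 with h | h
      · exact ⟨p.1, q.1, hp2, hq2, by nlinarith [mul_nonneg ht0 (sub_nonneg.2 h)],
          by nlinarith [mul_nonneg (sub_nonneg.2 ht1) (sub_nonneg.2 h)], hq1⟩
      · exact ⟨q.1, p.1, hq2, hp2, by nlinarith [mul_nonneg (sub_nonneg.2 ht1) (sub_nonneg.2 h)],
          by nlinarith [mul_nonneg ht0 (sub_nonneg.2 h)], hp1⟩
    have H : (s - a) * (b - s) ≥ 0 := mul_nonneg (by linarith) (by linarith)
    have hs2 : s ^ 2 + ε < 0 := by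
      rcases le_total 0 (a + b) with h0 | h0
      · nlinarith [mul_nonneg h0 (sub_nonneg.2 hsb)]
      · nlinarith [mul_nonneg (by linarith : (0:ℝ) ≤ -(a + b)) (sub_nonneg.2 hsa)]
    have hs1 : s < 1 := lt_of_le_of_lt hsb hb1
    apply ne_of_lt
    have := mul_pos (neg_pos.2 (sub_neg.2 hs1)) (neg_pos.2 hs2)
    nlinarith
  exact ((vert_neg ε hp).trans seg2).trans (vert_neg ε hq).symm

lemma cubic_bound {ε A E B s : ℝ} (hA0 : 0 < A) (hsu : s ≤ A) (hsl : -A ≤ s)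
    (hEl : ε ≤ E) (hEr : -E ≤ ε) (hB1 : 1 ≤ B)
    (hBbig : 1 + (A + 1) * (A ^ 2 + E) ≤ B) :
    0 < B ^ 2 - (s - 1) * (s ^ 2 + ε) := by
  have hs3 : s ^ 3 ≤ A ^ 3 := by
    nlinarith [mul_nonneg (by linarith : (0:ℝ) ≤ A - s)
      (by positivity : (0:ℝ) ≤ (A + s) ^ 2 + A ^ 2 + s ^ 2)]
  have hse : s * ε ≤ A * E := by
    rcases le_total 0 ε with h | h
    · nlinarith [mul_nonneg (by linarith : (0:ℝ) ≤ A - s) h,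
        mul_nonneg hA0.le (by linarith : (0:ℝ) ≤ E - ε)]
    · nlinarith [mul_nonneg (by linarith : (0:ℝ) ≤ s + A) (by linarith : (0:ℝ) ≤ -ε),
        mul_nonneg hA0.le (by linarith : (0:ℝ) ≤ E + ε)]
  have hBB : B ≤ B ^ 2 := by nlinarith
  nlinarith [sq_nonneg s, sq_nonneg A]

lemma vseg_pos {ε x y Y : ℝ} (h : 0 < y ^ 2 - (x - 1) * (x ^ 2 + ε)) (hy : 0 ≤ y)
    (hY : y ≤ Y) {t : ℝ} (ht0 : 0 ≤ t) (ht1 : t ≤ 1) :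
    0 < ((1 - t) * y + t * Y) ^ 2 - (x - 1) * (x ^ 2 + ε) := by
  have h1 : y ≤ (1 - t) * y + t * Y := by nlinarith [mul_nonneg ht0 (sub_nonneg.2 hY)]
  nlinarith

lemma farleft_pos {ε s : ℝ} (hsu : s ≤ -(2 + ε ^ 2)) :
    0 < 0 - (s - 1) * (s ^ 2 + ε) := by
  have hs2 : 0 < s ^ 2 + ε := by
    nlinarith [mul_nonneg (by nlinarith [sq_nonneg ε] : (0:ℝ) ≤ -s - (2 + ε ^ 2))
      (by nlinarith [sq_nonneg ε] : (0:ℝ) ≤ -s + (2 + ε ^ 2)), sq_nonneg (ε + 1), sq_nonneg ε]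
  have hs1 : s < 1 := by nlinarith [sq_nonneg ε]
  nlinarith [mul_pos (by linarith : (0:ℝ) < 1 - s) hs2]

/-- join a point of the positive region with nonnegative y to the far-left reference point -/
lemma pos_joined_ref (ε : ℝ) {p : ℝ × ℝ}
    (hp : 0 < p.2 ^ 2 - (p.1 - 1) * (p.1 ^ 2 + ε)) (hy : 0 ≤ p.2) :
    JoinedIn (Uset ε) p (-(2 + ε ^ 2), 0) := by
  obtain ⟨A, hxu, hxl, hA1, hA0, hA2⟩ :
      ∃ A : ℝ, p.1 ≤ A ∧ -A ≤ p.1 ∧ 2 + ε ^ 2 ≤ A ∧ 0 < A ∧ 0 < A ^ 2 + ε := by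
    refine ⟨2 + ε ^ 2 + |p.1|, ?_, ?_, ?_, ?_, ?_⟩
    · nlinarith [le_abs_self p.1, sq_nonneg ε]
    · nlinarith [neg_abs_le p.1, sq_nonneg ε]
    · nlinarith [abs_nonneg p.1]
    · nlinarith [abs_nonneg p.1, sq_nonneg ε]
    · nlinarith [abs_nonneg p.1, sq_nonneg ε, sq_nonneg (ε + 1),
        mul_nonneg (abs_nonneg p.1) (by positivity : (0:ℝ) ≤ 2 + ε ^ 2), sq_nonneg p.1]
  obtain ⟨E, hE0, hEl, hEr⟩ : ∃ E : ℝ, 0 ≤ E ∧ ε ≤ E ∧ -E ≤ ε :=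
    ⟨|ε|, abs_nonneg ε, le_abs_self ε, neg_abs_le ε⟩
  obtain ⟨B, hBy, hB1, hBbig⟩ :
      ∃ B : ℝ, p.2 ≤ B ∧ 1 ≤ B ∧ 1 + (A + 1) * (A ^ 2 + E) ≤ B := by
    have h0 : (0:ℝ) ≤ (A + 1) * (A ^ 2 + E) := by positivity
    exact ⟨p.2 + 1 + (A + 1) * (A ^ 2 + E), by linarith, by linarith, by linarith⟩
  have seg1 : JoinedIn (Uset ε) p (p.1, B) := by
    apply joinedIn_seg
    intro t ht0 ht1
    simp only [Uset, Set.mem_setOf_eq]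
    have e1 : (1 - t) * p.1 + t * p.1 = p.1 := by ring
    rw [e1]
    exact (vseg_pos hp hy hBy ht0 ht1).ne'
  have seg2 : JoinedIn (Uset ε) (p.1, B) (-A, B) := by
    apply joinedIn_seg
    intro t ht0 ht1
    simp only [Uset, Set.mem_setOf_eq]
    have e1 : (1 - t) * B + t * B = B := by ring
    rw [e1]
    have hsu : (1 - t) * p.1 + t * (-A) ≤ A := by
      nlinarith [mul_nonneg ht0 (by linarith : (0:ℝ) ≤ A + A)]
    have hsl : -A ≤ (1 - t) * p.1 + t * (-A) := by
      nlinarith [mul_nonneg (sub_nonneg.2 ht1) (by linarith : (0:ℝ) ≤ p.1 + A)]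
    exact (cubic_bound hA0 hsu hsl hEl hEr hB1 hBbig).ne'
  have seg3 : JoinedIn (Uset ε) (-A, B) ((-A : ℝ), (0:ℝ)) := by
    apply joinedIn_seg
    intro t ht0 ht1
    simp only [Uset, Set.mem_setOf_eq]
    have e1 : (1 - t) * (-A) + t * (-A) = -A := by ring
    rw [e1]
    have : 0 < ((1 - t) * B + t * 0) ^ 2 - (-A - 1) * ((-A) ^ 2 + ε) := by
      nlinarith [sq_nonneg ((1 - t) * B + t * 0), mul_pos (by linarith : (0:ℝ) < A + 1) hA2]
    exact this.ne'
  have seg4 : JoinedIn (Uset ε) ((-A : ℝ), (0:ℝ)) (-(2 + ε ^ 2), 0) := by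
    apply joinedIn_seg
    intro t ht0 ht1
    simp only [Uset, Set.mem_setOf_eq]
    have e1 : (1 - t) * (0:ℝ) + t * 0 = 0 := by ring
    rw [e1]
    have hsu : (1 - t) * (-A) + t * (-(2 + ε ^ 2)) ≤ -(2 + ε ^ 2) := by
      nlinarith [mul_nonneg (sub_nonneg.2 ht1) (by linarith : (0:ℝ) ≤ A - (2 + ε ^ 2))]
    have h2 := farleft_pos hsu
    have e2 : (0:ℝ) ^ 2 = 0 := by norm_num
    rw [e2]
    exact h2.ne'
  exact ((seg1.trans seg2).trans seg3).trans seg4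

/-- positive region is joined -/
lemma pos_joined (ε : ℝ) {p q : ℝ × ℝ}
    (hp : 0 < p.2 ^ 2 - (p.1 - 1) * (p.1 ^ 2 + ε))
    (hq : 0 < q.2 ^ 2 - (q.1 - 1) * (q.1 ^ 2 + ε)) :
    JoinedIn (Uset ε) p q := by
  have key : ∀ z : ℝ × ℝ, 0 < z.2 ^ 2 - (z.1 - 1) * (z.1 ^ 2 + ε) →
      JoinedIn (Uset ε) z (-(2 + ε ^ 2), 0) := by
    intro z hz
    rcases le_total 0 z.2 with h | h
    · exact pos_joined_ref ε hz h
    · have hz' : 0 < ((z.1, -z.2) : ℝ × ℝ).2 ^ 2 -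
          (((z.1, -z.2) : ℝ × ℝ).1 - 1) * (((z.1, -z.2) : ℝ × ℝ).1 ^ 2 + ε) := by
        simp only
        nlinarith
      have h2 := joined_flip ε (pos_joined_ref ε hz' (by simpa using h))
      simpa using h2
  exact (key p hp).trans (key q hq).symm

lemma joined_of_joinedIn {ε : ℝ}
    (x y : {p : ℝ × ℝ // p.2 ^ 2 - (p.1 - 1) * (p.1 ^ 2 + ε) ≠ 0})
    (h : JoinedIn (Uset ε) x.1 y.1) : Joined x y := by
  have := h.joined_subtype
  exact this

end Stmt15Aux

/-- The complement in `ℝ²` of the cubic curve `{y² − (x−1)(x²+ε) = 0}` has exactly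
three connected components when `ε < 0`, and exactly two when `ε ≥ 0`. -/
theorem stmt_15 (ε : ℝ) :
    (ε < 0 → Nat.card (ConnectedComponents
        {p : ℝ × ℝ // p.2 ^ 2 - (p.1 - 1) * (p.1 ^ 2 + ε) ≠ 0}) = 3) ∧
    (0 ≤ ε → Nat.card (ConnectedComponents
        {p : ℝ × ℝ // p.2 ^ 2 - (p.1 - 1) * (p.1 ^ 2 + ε) ≠ 0}) = 2) := by
  set X := {p : ℝ × ℝ // p.2 ^ 2 - (p.1 - 1) * (p.1 ^ 2 + ε) ≠ 0} with hX
  have hcontF : Continuous (fun x : X => x.1.2 ^ 2 - (x.1.1 - 1) * (x.1.1 ^ 2 + ε)) := by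
    fun_prop
  have hcont1 : Continuous (fun x : X => x.1.1) := by fun_prop
  have hne : ∀ x : X, x.1.2 ^ 2 - (x.1.1 - 1) * (x.1.1 ^ 2 + ε) ≠ 0 := fun x => x.2
  have hne1 : ∀ x : X, x.1.2 ^ 2 - (x.1.1 - 1) * (x.1.1 ^ 2 + ε) < 0 → x.1.1 ≠ 1 := by
    intro x hlt he
    rw [he] at hlt
    nlinarith [sq_nonneg x.1.2]
  constructor
  · -- ε < 0 : three components
    intro hε
    classical
    set g : X → Fin 3 := fun x =>
      if 0 < x.1.2 ^ 2 - (x.1.1 - 1) * (x.1.1 ^ 2 + ε) then 0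
      else if x.1.1 < 1 then 1 else 2 with hg
    apply card_components_eq g
    · -- continuity
      apply IsLocallyConstant.continuous
      rw [IsLocallyConstant.iff_isOpen_fiber]
      intro i
      fin_cases i
      · have : (g ⁻¹' {0}) = {x : X | 0 < x.1.2 ^ 2 - (x.1.1 - 1) * (x.1.1 ^ 2 + ε)} := by
          ext x
          simp only [hg, Set.mem_preimage, Set.mem_singleton_iff, Set.mem_setOf_eq]
          split_ifs with h1 h2 <;> simp_all <;> decide
        show IsOpen (g ⁻¹' {(0 : Fin 3)})
        rw [this]
        exact isOpen_lt continuous_const hcontF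
      · have : (g ⁻¹' {1}) = {x : X | x.1.2 ^ 2 - (x.1.1 - 1) * (x.1.1 ^ 2 + ε) < 0}
            ∩ {x : X | x.1.1 < 1} := by
          ext x
          simp only [hg, Set.mem_preimage, Set.mem_singleton_iff, Set.mem_inter_iff,
            Set.mem_setOf_eq]
          split_ifs with h1 h2
          · constructor <;> intro h <;> [skip; exact absurd h.1 (asymm h1)] <;> exact absurd h (by decide)
          · constructor <;> intro h
            · exact ⟨lt_of_le_of_ne (not_lt.1 h1) (hne x), h2⟩
            · rfl
          · constructor <;> intro h
            · exact absurd h (by decide)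
            · exact absurd h.2 h2
        show IsOpen (g ⁻¹' {(1 : Fin 3)})
        rw [this]
        exact (isOpen_lt hcontF continuous_const).inter (isOpen_lt hcont1 continuous_const)
      · have : (g ⁻¹' {2}) = {x : X | x.1.2 ^ 2 - (x.1.1 - 1) * (x.1.1 ^ 2 + ε) < 0}
            ∩ {x : X | 1 < x.1.1} := by
          ext x
          simp only [hg, Set.mem_preimage, Set.mem_singleton_iff, Set.mem_inter_iff,
            Set.mem_setOf_eq]
          split_ifs with h1 h2
          · constructor <;> intro h
            · exact absurd h (by decide)
            · exact absurd h.1 (asymm h1)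
          · constructor <;> intro h
            · exact absurd h (by decide)
            · exact absurd h.2 (asymm h2)
          · constructor <;> intro h
            · have hlt := lt_of_le_of_ne (not_lt.1 h1) (hne x)
              exact ⟨hlt, lt_of_le_of_ne (not_lt.1 h2) (Ne.symm (hne1 x hlt))⟩
            · rfl
        show IsOpen (g ⁻¹' {(2 : Fin 3)})
        rw [this]
        exact (isOpen_lt hcontF continuous_const).inter (isOpen_lt continuous_const hcont1)
    · -- surjectivity
      intro i
      fin_cases i
      · refine ⟨⟨(1, 1), by norm_num⟩, ?_⟩
        simp only [hg]
        norm_num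
      · refine ⟨⟨(0, 0), by simpa using hε.ne⟩, ?_⟩
        simp only [hg]
        norm_num
        exact hε.le
      · have h1 : (0:ℝ) < (2 + ε ^ 2) ^ 2 + ε := by nlinarith [sq_nonneg ε, sq_nonneg (ε + 1)]
        have h2 : ((0:ℝ)) ^ 2 - ((2 + ε ^ 2) - 1) * ((2 + ε ^ 2) ^ 2 + ε) < 0 := by
          nlinarith [sq_nonneg ε]
        refine ⟨⟨(2 + ε ^ 2, 0), by exact h2.ne⟩, ?_⟩
        simp only [hg]
        rw [if_neg (by exact not_lt.2 h2.le), if_neg (by nlinarith [sq_nonneg ε])]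
        rfl
    · -- joined
      intro x y hxy
      apply joined_of_joinedIn
      simp only [hg] at hxy
      by_cases hx : 0 < x.1.2 ^ 2 - (x.1.1 - 1) * (x.1.1 ^ 2 + ε) <;>
        by_cases hy : 0 < y.1.2 ^ 2 - (y.1.1 - 1) * (y.1.1 ^ 2 + ε)
      · exact pos_joined ε hx hy
      · rw [if_pos hx, if_neg hy] at hxy
        split_ifs at hxy <;> exact absurd hxy (by decide)
      · rw [if_neg hx, if_pos hy] at hxy
        split_ifs at hxy <;> exact absurd hxy (by decide)
      · have hx' := lt_of_le_of_ne (not_lt.1 hx) (hne x)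
        have hy' := lt_of_le_of_ne (not_lt.1 hy) (hne y)
        rw [if_neg hx, if_neg hy] at hxy
        by_cases hx1 : x.1.1 < 1 <;> by_cases hy1 : y.1.1 < 1
        · exact oval_joined ε hx' hy' hx1 hy1
        · rw [if_pos hx1, if_neg hy1] at hxy
          exact absurd hxy (by decide)
        · rw [if_neg hx1, if_pos hy1] at hxy
          exact absurd hxy (by decide)
        · exact branch_joined ε hx' hy'
            (lt_of_le_of_ne (not_lt.1 hx1) (Ne.symm (hne1 x hx')))
            (lt_of_le_of_ne (not_lt.1 hy1) (Ne.symm (hne1 y hy')))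
  · -- 0 ≤ ε : two components
    intro hε
    classical
    set g : X → Fin 2 := fun x =>
      if 0 < x.1.2 ^ 2 - (x.1.1 - 1) * (x.1.1 ^ 2 + ε) then 0 else 1 with hg
    have hbr : ∀ x : X, x.1.2 ^ 2 - (x.1.1 - 1) * (x.1.1 ^ 2 + ε) < 0 → 1 < x.1.1 := by
      intro x hlt
      nlinarith [sq_nonneg x.1.2, sq_nonneg x.1.1,
        mul_nonneg (sq_nonneg x.1.1) hε]
    apply card_components_eq g
    · apply IsLocallyConstant.continuous
      rw [IsLocallyConstant.iff_isOpen_fiber]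
      intro i
      fin_cases i
      · have : (g ⁻¹' {0}) = {x : X | 0 < x.1.2 ^ 2 - (x.1.1 - 1) * (x.1.1 ^ 2 + ε)} := by
          ext x
          simp only [hg, Set.mem_preimage, Set.mem_singleton_iff, Set.mem_setOf_eq]
          split_ifs with h1 <;> simp_all
        show IsOpen (g ⁻¹' {(0 : Fin 2)})
        rw [this]
        exact isOpen_lt continuous_const hcontF
      · have : (g ⁻¹' {1}) = {x : X | x.1.2 ^ 2 - (x.1.1 - 1) * (x.1.1 ^ 2 + ε) < 0} := by
          ext x
          simp only [hg, Set.mem_preimage, Set.mem_singleton_iff, Set.mem_setOf_eq]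
          split_ifs with h1
          · constructor <;> intro h
            · exact absurd h (by decide)
            · exact absurd h (asymm h1)
          · constructor <;> intro h
            · exact lt_of_le_of_ne (not_lt.1 h1) (hne x)
            · rfl
        show IsOpen (g ⁻¹' {(1 : Fin 2)})
        rw [this]
        exact isOpen_lt hcontF continuous_const
    · intro i
      fin_cases i
      · refine ⟨⟨(1, 1), by norm_num⟩, ?_⟩
        simp only [hg]
        norm_num
      · have h2 : ((0:ℝ)) ^ 2 - ((2 : ℝ) - 1) * ((2:ℝ) ^ 2 + ε) < 0 := by nlinarith
        refine ⟨⟨((2:ℝ), (0:ℝ)), by exact h2.ne⟩, ?_⟩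
        simp only [hg]
        rw [if_neg (by exact not_lt.2 h2.le)]
        rfl
    · intro x y hxy
      apply joined_of_joinedIn
      simp only [hg] at hxy
      by_cases hx : 0 < x.1.2 ^ 2 - (x.1.1 - 1) * (x.1.1 ^ 2 + ε) <;>
        by_cases hy : 0 < y.1.2 ^ 2 - (y.1.1 - 1) * (y.1.1 ^ 2 + ε)
      · exact pos_joined ε hx hy
      · rw [if_pos hx, if_neg hy] at hxy
        exact absurd hxy (by decide)
      · rw [if_neg hx, if_pos hy] at hxy
        exact absurd hxy (by decide)
      · have hx' := lt_of_le_of_ne (not_lt.1 hx) (hne x)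
        have hy' := lt_of_le_of_ne (not_lt.1 hy) (hne y)
        exact branch_joined ε hx' hy' (hbr x hx') (hbr y hy')
end
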